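/- arXiv:2309.04517 — 2 statements merged into one kernel-verified Lean document; each statement's English description precedes it below -/
import Mathlib

section
/- If G is an Eulerian graph of order n that is not a cycle, then G has at least n+1 edges and M_2(G) ≥ 4n + 20. -/
open SimpleGraph Finset

/-- Wiener index: sum of distances over unordered pairs of vertices. -/
noncomputable def wienerIndex {n : ℕ} (G : SimpleGraph (Fin n)) : ℕ :=
  ∑ p ∈ Finset.univ.filter (fun p : Fin n × Fin n => p.1 < p.2), G.dist p.1 p.2

/-- Harary index: sum of reciprocal distances over unordered pairs of vertices. -/
noncomputable def hararyIndex {n : ℕ} (G : SimpleGraph (Fin n)) : ℝ :=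
  ∑ p ∈ Finset.univ.filter (fun p : Fin n × Fin n => p.1 < p.2), (1 : ℝ) / (G.dist p.1 p.2)

/-- A graph is Eulerian if it is connected and every vertex has even degree. -/
def IsEulerian {n : ℕ} (G : SimpleGraph (Fin n)) [DecidableRel G.Adj] : Prop :=
  G.Connected ∧ ∀ v, Even (G.degree v)

/-- A graph is 2-edge-connected if it is connected and remains connected
after the deletion of any single edge. -/
def TwoEdgeConnected {n : ℕ} (G : SimpleGraph (Fin n)) : Prop :=
  G.Connected ∧ ∀ e ∈ G.edgeSet, (G.deleteEdges {e}).Connected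

/-- A graph is 2-connected if it has at least 3 vertices and deleting any
single vertex leaves it connected (no cutvertex). -/
def TwoConnected {n : ℕ} (G : SimpleGraph (Fin n)) : Prop :=
  3 ≤ n ∧ G.Connected ∧
    ∀ v : Fin n, ((⊤ : G.Subgraph).deleteVerts {v}).coe.Connected

/-- Second Zagreb index: `∑_{uv ∈ E} deg(u) * deg(v)`. -/
def secondZagreb {n : ℕ} (G : SimpleGraph (Fin n)) [DecidableRel G.Adj] : ℕ :=
  ∑ e ∈ G.edgeFinset,
    Sym2.lift ⟨fun u v => G.degree u * G.degree v, fun u v => Nat.mul_comm _ _⟩ e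

/-!
A connected graph in which every vertex has degree 2 is a cycle: it has a Hamiltonian cycle, hence
a copy of `cycleGraph n`, and a spanning subgraph with the same degrees is the whole graph. So an
Eulerian graph that is not a cycle has minimum degree at least 2 and a vertex `w` of degree at
least 4. Then `2|E| = ∑ deg ≥ 2n + 2`, and each edge contributes `deg u * deg v ≥ 4`, or `≥ 8` when
it contains `w`, so `M₂ ≥ 4|E| + 4 deg w ≥ 4(n + 1) + 16`.
-/
namespace SimpleGraph

variable {V : Type*} [Fintype V]

lemma eq_of_le_of_degree_le {G H : SimpleGraph V} [DecidableRel G.Adj] [DecidableRel H.Adj]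
    (hle : G ≤ H) (hdeg : ∀ v, H.degree v ≤ G.degree v) : G = H := by
  refine le_antisymm hle fun u v huv => ?_
  have hnbr : G.neighborFinset u = H.neighborFinset u :=
    Finset.eq_of_subset_of_card_le (fun w => by simpa using @hle u w) (hdeg u)
  rw [← mem_neighborFinset, hnbr, mem_neighborFinset]
  exact huv

lemma isCycles_of_degree_eq_two {G : SimpleGraph V} [DecidableRel G.Adj]
    (hdeg : ∀ v, G.degree v = 2) : G.IsCycles := fun v _ => by
  rw [← coe_neighborFinset, Set.ncard_coe_finset]
  exact hdeg v

lemma Connected.exists_isHamiltonianCycle_of_isCycles [DecidableEq V] {G : SimpleGraph V}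
    (hconn : G.Connected) (hcyc : G.IsCycles) {v : V} (hv : (G.neighborSet v).Nonempty) :
    ∃ p : G.Walk v v, p.IsHamiltonianCycle := by
  obtain ⟨p, hp, hverts⟩ := hcyc.exists_cycle_toSubgraph_verts_eq_connectedComponentSupp
    (c := G.connectedComponentMk v) rfl hv
  refine ⟨p, hp, hp.isPath_tail.isHamiltonian_of_mem fun w => ?_⟩
  have hw : w ∈ p.support := by
    rw [← Walk.mem_verts_toSubgraph, hverts, ConnectedComponent.mem_supp_iff,
      ConnectedComponent.eq]
    exact hconn.preconnected w v
  rw [Walk.support_tail_of_not_nil _ hp.not_nil]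
  rcases (Walk.mem_support_iff p).mp hw with rfl | hw
  exacts [Walk.end_mem_tail_support hp.not_nil, hw]

lemma cycleGraph_degree_eq_two {n : ℕ} (hn : 3 ≤ n) (v : Fin n) : (cycleGraph n).degree v = 2 := by
  obtain ⟨m, rfl⟩ : ∃ m, n = m + 3 := ⟨n - 3, by omega⟩
  exact cycleGraph_degree_three_le

lemma Connected.nonempty_iso_cycleGraph_of_degree_eq_two {G : SimpleGraph V}
    [DecidableRel G.Adj] (hconn : G.Connected) (hdeg : ∀ v, G.degree v = 2) :
    Nonempty (G ≃g cycleGraph (Fintype.card V)) := by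
  classical
  obtain ⟨v⟩ := hconn.nonempty
  have hcard : 3 ≤ Fintype.card V := by
    have := G.degree_lt_card_verts v
    rwa [hdeg] at this
  obtain ⟨p, hp⟩ := hconn.exists_isHamiltonianCycle_of_isCycles (isCycles_of_degree_eq_two hdeg)
    (v := v) (by rw [← degree_pos_iff_nonempty, hdeg]; omega)
  obtain ⟨f, hf⟩ := isContained_iff_exists_le_comap.mp <|
    (cycleGraph_isContained_iff hcard).mpr ⟨v, p, hp.isCycle, hp.length_eq⟩
  let e : Fin (Fintype.card V) ≃ V :=
    Equiv.ofBijective f ((Fintype.bijective_iff_injective_and_card f).mpr ⟨f.injective, by simp⟩)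
  have hcomap : cycleGraph _ = G.comap e := by
    refine eq_of_le_of_degree_le hf fun i => ?_
    rw [cycleGraph_degree_eq_two hcard, ← (Iso.comap e G).degree_eq i, hdeg]
  exact ⟨hcomap ▸ (Iso.comap e G).symm⟩

lemma Connected.two_le_degree_of_even [Nontrivial V] {G : SimpleGraph V} [DecidableRel G.Adj]
    (hconn : G.Connected) {v : V} (heven : Even (G.degree v)) : 2 ≤ G.degree v := by
  have := hconn.preconnected.degree_pos_of_nontrivial v
  obtain ⟨k, hk⟩ := heven
  omega

lemma card_add_one_le_card_edgeFinset {G : SimpleGraph V} [DecidableRel G.Adj]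
    (hmin : ∀ v, 2 ≤ G.degree v) {w : V} (hw : 4 ≤ G.degree w) :
    Fintype.card V + 1 ≤ #G.edgeFinset := by
  classical
  have hrest : 2 * #(univ.erase w) ≤ ∑ v ∈ univ.erase w, G.degree v := by
    rw [mul_comm, ← smul_eq_mul, ← sum_const]
    exact sum_le_sum fun v _ => hmin v
  have hsum := G.sum_degrees_eq_twice_card_edges
  rw [← add_sum_erase _ _ (mem_univ w)] at hsum
  rw [card_erase_of_mem (mem_univ w), card_univ] at hrest
  have := Fintype.card_pos_iff.mpr ⟨w⟩
  omega

end SimpleGraph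

lemma four_mul_card_edgeFinset_add_le_secondZagreb {n : ℕ} {G : SimpleGraph (Fin n)}
    [DecidableRel G.Adj] (hmin : ∀ v, 2 ≤ G.degree v) {w : Fin n} (hw : 4 ≤ G.degree w) :
    4 * #G.edgeFinset + 4 * G.degree w ≤ secondZagreb G := by
  have hedge : ∀ e ∈ G.edgeFinset, 4 + (if w ∈ e then 4 else 0) ≤
      Sym2.lift ⟨fun u v => G.degree u * G.degree v, fun u v => Nat.mul_comm _ _⟩ e := by
    intro e _
    induction e using Sym2.ind with
    | _ x y =>
      rw [Sym2.lift_mk]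
      split_ifs with hwe
      · rcases Sym2.mem_iff.mp hwe with rfl | rfl
        exacts [Nat.mul_le_mul hw (hmin y), Nat.mul_le_mul (hmin x) hw]
      · exact Nat.mul_le_mul (hmin x) (hmin y)
  calc 4 * #G.edgeFinset + 4 * G.degree w
      = ∑ e ∈ G.edgeFinset, (4 + if w ∈ e then 4 else 0) := by
        rw [sum_add_distrib, sum_const, smul_eq_mul, sum_ite, sum_const_zero, sum_const,
          smul_eq_mul, ← incidenceFinset_eq_filter, card_incidenceFinset_eq_degree]
        ring
    _ ≤ secondZagreb G := sum_le_sum hedge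

lemma IsEulerian.exists_four_le_degree {n : ℕ} {G : SimpleGraph (Fin n)} [DecidableRel G.Adj]
    (h : IsEulerian G) (hnc : ¬ Nonempty (G ≃g cycleGraph n)) : ∃ w, 4 ≤ G.degree w := by
  by_contra! hlt
  rcases subsingleton_or_nontrivial (Fin n) with _ | _
  · exact hnc ⟨Subsingleton.elim G (cycleGraph n) ▸ Iso.refl⟩
  · have hdeg : ∀ v, G.degree v = 2 := fun v => by
      have := h.1.two_le_degree_of_even (h.2 v)
      obtain ⟨k, hk⟩ := h.2 v
      have := hlt v
      omega
    have hiso := h.1.nonempty_iso_cycleGraph_of_degree_eq_two hdeg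
    rw [Fintype.card_fin] at hiso
    exact hnc hiso

/-- If `G` is an Eulerian graph of order `n` that is not a cycle, then `G`
has at least `n + 1` edges and `M₂(G) ≥ 4n + 20`. -/
theorem eulerian_not_cycle {n : ℕ} (G : SimpleGraph (Fin n))
    [DecidableRel G.Adj] (h : IsEulerian G)
    (hnc : ¬ Nonempty (G ≃g cycleGraph n)) :
    n + 1 ≤ G.edgeFinset.card ∧ 4 * n + 20 ≤ secondZagreb G := by
  obtain ⟨w, hw⟩ := h.exists_four_le_degree hnc
  have : Nontrivial (Fin n) := by
    have := G.degree_lt_card_verts w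
    rw [Fintype.card_fin] at this
    exact Fin.nontrivial_iff_two_le.mpr (by omega)
  have hmin : ∀ v, 2 ≤ G.degree v := fun v => h.1.two_le_degree_of_even (h.2 v)
  have hedge := card_add_one_le_card_edgeFinset hmin hw
  rw [Fintype.card_fin] at hedge
  have hzagreb := four_mul_card_edgeFinset_add_le_secondZagreb hmin hw
  exact ⟨hedge, by omega⟩
end

section
/- Let G be a 2-connected graph on n vertices and v any vertex. Then Σ_{u ≠ v} 1/d(u,v) ≥ (2/n)·H(C_n), i.e. the sum of reciprocal distances from v is at least 2·(1/1 + 1/1 + 1/2 + 1/2 + ... ) corresponding to the distance multiset {1,1,2,2,...,⌊(n-1)/2⌋,⌈(n-1)/2⌉}. -/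
open SimpleGraph Finset

/-! In a 2-connected graph every distance level `1 ≤ j < ecc v` around `v` has at least two
vertices, since a unique vertex at level `j` would separate `v` from the vertices farther away.
Hence at least `min (2k) (n - 1)` vertices lie within distance `k` of `v`, while in `C_n`, whose
levels have at most two vertices, at most that many lie within distance `k` of any `w`. As
`d ↦ 1 / d` is antitone, Abel summation turns this domination of distance counts into
`∑ 1 / d_{C_n}(u, w) ≤ ∑ 1 / d_G(u, v)`, and averaging over `w` gives `2 H(C_n) / n`. -/

theorem sum_comp_eq_card_mul_add_sum_card_filter_le {ι : Type*} (φ : ℕ → ℝ) {s : Finset ι}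
    {f : ι → ℕ} {M : ℕ} (hf : ∀ i ∈ s, 1 ≤ f i ∧ f i ≤ M) :
    ∑ i ∈ s, φ (f i) = #s * φ M + ∑ k ∈ Ico 1 M, (φ k - φ (k + 1)) * #{i ∈ s | f i ≤ k} := by
  have telescope : ∀ i ∈ s,
      φ (f i) = φ M + ∑ k ∈ Ico 1 M, if f i ≤ k then φ k - φ (k + 1) else 0 := by
    intro i hi
    obtain ⟨h1, hM⟩ := hf i hi
    have hIco : {k ∈ Ico 1 M | f i ≤ k} = Ico (f i) M := by
      ext k; simp only [mem_filter, mem_Ico]; omega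
    rw [← sum_filter, hIco]
    simp only [← neg_sub (φ (_ + 1)), sum_neg_distrib, sum_Ico_sub φ hM]
    ring
  simp only [sum_congr rfl telescope, sum_add_distrib, sum_const, nsmul_eq_mul]
  rw [sum_comm]
  simp only [← sum_filter, sum_const, nsmul_eq_mul, mul_comm]

theorem sum_le_sum_of_card_filter_le {ι κ : Type*} {φ : ℕ → ℝ} {s : Finset ι} {t : Finset κ}
    {f : ι → ℕ} {g : κ → ℕ} (hφ : AntitoneOn φ (Set.Ici 1)) (hφ₀ : ∀ k, 1 ≤ k → 0 ≤ φ k)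
    (hf : ∀ i ∈ s, 1 ≤ f i) (hg : ∀ j ∈ t, 1 ≤ g j)
    (hcard : ∀ k, #{i ∈ s | f i ≤ k} ≤ #{j ∈ t | g j ≤ k}) :
    ∑ i ∈ s, φ (f i) ≤ ∑ j ∈ t, φ (g j) := by
  set M := max 1 (max (s.sup f) (t.sup g))
  have hsM : ∀ i ∈ s, 1 ≤ f i ∧ f i ≤ M := fun i hi =>
    ⟨hf i hi, (le_sup hi).trans ((le_max_left _ _).trans (le_max_right _ _))⟩
  have htM : ∀ j ∈ t, 1 ≤ g j ∧ g j ≤ M := fun j hj =>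
    ⟨hg j hj, (le_sup hj).trans ((le_max_right _ _).trans (le_max_right _ _))⟩
  have hst : #s ≤ #t := by
    simpa [filter_true_of_mem fun i hi => (hsM i hi).2,
      filter_true_of_mem fun j hj => (htM j hj).2] using hcard M
  rw [sum_comp_eq_card_mul_add_sum_card_filter_le φ hsM,
    sum_comp_eq_card_mul_add_sum_card_filter_le φ htM]
  gcongr with k hk
  · exact hφ₀ M (le_max_left _ _)
  · have hk1 : 1 ≤ k := (mem_Ico.1 hk).1
    exact sub_nonneg.2 (hφ (Set.mem_Ici.2 hk1) (Set.mem_Ici.2 (by omega)) (by omega))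
  · exact hcard k

namespace SimpleGraph

variable {V : Type*} {G : SimpleGraph V}

theorem exists_adj_dist_add_one_eq {u v : V} (h : G.dist u v ≠ 0) :
    ∃ w, G.Adj u w ∧ G.dist w v + 1 = G.dist u v := by
  obtain ⟨p, hp⟩ := exists_walk_of_dist_ne_zero h
  cases p with
  | nil => simp at h
  | cons hadj q =>
    refine ⟨_, hadj, ?_⟩
    have hq := G.dist_le q
    have hstep := hadj.diff_dist_adj (u := v)
    rw [Walk.length_cons] at hp
    rw [dist_comm (u := v), dist_comm (u := v)] at hstep
    omega

theorem Walk.exists_mem_support_dist_eq {a b v : V} (p : G.Walk a b) {j : ℕ}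
    (ha : G.dist a v ≤ j) (hb : j ≤ G.dist b v) : ∃ x ∈ p.support, G.dist x v = j := by
  induction p with
  | nil => exact ⟨_, Walk.start_mem_support _, le_antisymm ha hb⟩
  | cons hadj p ih =>
    rcases ha.eq_or_lt with ha | ha
    · exact ⟨_, Walk.start_mem_support _, ha⟩
    · have hstep := hadj.diff_dist_adj (u := v)
      rw [dist_comm (u := v), dist_comm (u := v)] at hstep
      obtain ⟨x, hx, hxj⟩ := ih (by omega) hb
      exact ⟨x, Walk.support_cons _ _ ▸ List.mem_cons_of_mem _ hx, hxj⟩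

variable [Fintype V] [DecidableEq V]

theorem Connected.card_filter_dist_le_eq_sum (hG : G.Connected) (v : V) (k : ℕ) :
    #{u ∈ univ.erase v | G.dist u v ≤ k} = ∑ j ∈ Icc 1 k, #{x | G.dist x v = j} := by
  rw [card_eq_sum_card_fiberwise (f := (G.dist · v)) (t := Icc 1 k)]
  · refine sum_congr rfl fun j hj => congrArg card ?_
    have hj1 := (mem_Icc.1 hj).1
    ext x
    simp only [mem_filter, mem_erase, mem_univ, and_true, true_and]
    constructor
    · exact fun h => h.2
    · rintro rfl
      refine ⟨⟨?_, (mem_Icc.1 hj).2⟩, rfl⟩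
      rintro rfl
      simp at hj1
  · intro u hu
    simp only [coe_filter, mem_erase, ne_eq, mem_univ, and_true, Set.mem_ofPred_eq] at hu
    exact mem_Icc.2 ⟨hG.pos_dist_of_ne hu.1, hu.2⟩

theorem card_filter_dist_eq_le_two [DecidableRel G.Adj] (hdeg : ∀ x, G.degree x ≤ 2) (v : V)
    {j : ℕ} (hj : 1 ≤ j) : #{x | G.dist x v = j} ≤ 2 := by
  induction j, hj using Nat.le_induction with
  | base =>
    have : ({x | G.dist x v = 1} : Finset V) = G.neighborFinset v := by
      ext x; simp [adj_comm]
    rw [this, card_neighborFinset_eq_degree]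
    exact hdeg v
  | succ j hj ih =>
    refine le_trans (card_le_card_of_forall_subsingleton G.Adj ?_ ?_) ih
    · intro x hx
      rw [mem_filter] at hx
      obtain ⟨y, hxy, hy⟩ := exists_adj_dist_add_one_eq (G := G) (u := x) (v := v) (by omega)
      exact ⟨y, by simp only [mem_filter, mem_univ, true_and]; omega, hxy⟩
    · intro y hy x₁ hx₁ x₂ hx₂
      simp only [mem_filter, mem_univ, true_and, Set.mem_ofPred_eq] at hy hx₁ hx₂
      by_contra hne
      -- `y` also has a neighbour one step closer to `v`, giving it three neighbours.
      obtain ⟨z, hyz, hz⟩ := exists_adj_dist_add_one_eq (G := G) (u := y) (v := v) (by omega)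
      have hsub : ({x₁, x₂, z} : Finset V) ⊆ G.neighborFinset y := by
        intro a ha
        simp only [mem_insert, mem_singleton] at ha
        rcases ha with rfl | rfl | rfl
        · exact (G.mem_neighborFinset _ _).2 hx₁.2.symm
        · exact (G.mem_neighborFinset _ _).2 hx₂.2.symm
        · exact (G.mem_neighborFinset _ _).2 hyz
      have hthree : #({x₁, x₂, z} : Finset V) = 3 :=
        card_eq_three.2 ⟨x₁, x₂, z, hne, by rintro rfl; omega, by rintro rfl; omega, rfl⟩
      have := card_le_card hsub
      rw [hthree, card_neighborFinset_eq_degree] at this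
      exact absurd (hdeg y) (by omega)

theorem Connected.card_filter_dist_le_le_min [DecidableRel G.Adj] (hG : G.Connected)
    (hdeg : ∀ x, G.degree x ≤ 2) (v : V) (k : ℕ) :
    #{u ∈ univ.erase v | G.dist u v ≤ k} ≤ min (2 * k) (Fintype.card V - 1) := by
  refine le_min ?_ ((card_filter_le _ _).trans (by simp [card_erase_of_mem]))
  rw [hG.card_filter_dist_le_eq_sum]
  calc _ ≤ ∑ _j ∈ Icc 1 k, 2 :=
        sum_le_sum fun j hj => card_filter_dist_eq_le_two hdeg v (mem_Icc.1 hj).1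
    _ = 2 * k := by simp [mul_comm]

end SimpleGraph

namespace TwoConnected

variable {n : ℕ} {G : SimpleGraph (Fin n)}

theorem exists_walk_notMem_support (h : TwoConnected G) {a b x : Fin n} (ha : a ≠ x)
    (hb : b ≠ x) : ∃ p : G.Walk a b, x ∉ p.support := by
  obtain ⟨q⟩ := (h.2.2 x).preconnected ⟨a, by simp [ha]⟩ ⟨b, by simp [hb]⟩
  refine ⟨q.map (Subgraph.hom _), fun hx => ?_⟩
  obtain ⟨⟨y, hy⟩, -, hyx⟩ := List.mem_map.1 ((Walk.support_map _ q).symm ▸ hx)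
  simp only [Subgraph.deleteVerts_verts, Subgraph.verts_top, Set.mem_sdiff, Set.mem_univ,
    Set.mem_singleton_iff, true_and] at hy
  exact hy hyx

theorem one_lt_card_filter_dist_eq (h : TwoConnected G) {u v : Fin n} {j : ℕ} (hj : 1 ≤ j)
    (hju : j < G.dist u v) : 1 < #{x | G.dist x v = j} := by
  have hv : G.dist v v ≤ j := by simp
  obtain ⟨x, -, hx⟩ := (h.2.1 v u).some.exists_mem_support_dist_eq hv hju.le
  have hxv : v ≠ x := by rintro rfl; simp at hx; omega
  have hxu : u ≠ x := by rintro rfl; omega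
  obtain ⟨q, hq⟩ := h.exists_walk_notMem_support hxv hxu
  obtain ⟨y, hy, hyj⟩ := q.exists_mem_support_dist_eq hv hju.le
  exact one_lt_card.2 ⟨x, by simpa using hx, y, by simpa using hyj, fun hxy => hq (hxy ▸ hy)⟩

theorem min_le_card_filter_dist_le (h : TwoConnected G) (v : Fin n) (k : ℕ) :
    min (2 * k) (n - 1) ≤ #{u ∈ univ.erase v | G.dist u v ≤ k} := by
  by_cases hall : ∀ u, G.dist u v ≤ k
  · rw [filter_true_of_mem fun u _ => hall u, card_erase_of_mem (mem_univ v), card_univ,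
      Fintype.card_fin]
    exact min_le_right _ _
  · push Not at hall
    obtain ⟨u, hu⟩ := hall
    rw [h.2.1.card_filter_dist_le_eq_sum v k]
    calc min (2 * k) (n - 1) ≤ ∑ _j ∈ Icc 1 k, 2 := by simp [mul_comm]
      _ ≤ _ := sum_le_sum fun j hj =>
        h.one_lt_card_filter_dist_eq (mem_Icc.1 hj).1 ((mem_Icc.1 hj).2.trans_lt hu)

end TwoConnected

theorem two_mul_hararyIndex {n : ℕ} (H : SimpleGraph (Fin n)) :
    2 * hararyIndex H = ∑ w, ∑ u ∈ univ.erase w, (1 : ℝ) / (H.dist u w) := by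
  have hswap : ∑ p ∈ univ.filter (fun p : Fin n × Fin n => p.1 < p.2), (1 : ℝ) / H.dist p.1 p.2
      = ∑ p ∈ univ.filter (fun p : Fin n × Fin n => p.2 < p.1), (1 : ℝ) / H.dist p.1 p.2 :=
    sum_equiv (Equiv.prodComm _ _) (fun p => by simp) (fun p _ => by simp [dist_comm])
  have hsplit (p : Fin n × Fin n) : (1 : ℝ) / H.dist p.1 p.2
      = (if p.1 < p.2 then (1 : ℝ) / H.dist p.1 p.2 else 0)
        + (if p.2 < p.1 then (1 : ℝ) / H.dist p.1 p.2 else 0) := by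
    rcases lt_trichotomy p.1 p.2 with hlt | heq | hgt
    · simp [hlt, hlt.not_gt]
    · simp [heq]
    · simp [hgt, hgt.not_gt]
  calc 2 * hararyIndex H = ∑ p : Fin n × Fin n, (1 : ℝ) / H.dist p.1 p.2 := by
        rw [sum_congr rfl fun p _ => hsplit p, sum_add_distrib, ← sum_filter, ← sum_filter,
          ← hswap, hararyIndex]
        ring
    _ = ∑ w, ∑ u ∈ univ.erase w, (1 : ℝ) / (H.dist u w) := by
        rw [← univ_product_univ, sum_product_right]
        exact sum_congr rfl fun w _ => (sum_erase _ (by simp)).symm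

/-- In a 2-connected graph `G` on `n` vertices, for every vertex `v`,
the sum of reciprocal distances from `v` is at least `(2/n) · H(C_n)`. -/
theorem sum_reciprocal_dist_ge {n : ℕ} (G : SimpleGraph (Fin n))
    (h : TwoConnected G) (v : Fin n) :
    (2 / (n : ℝ)) * hararyIndex (cycleGraph n) ≤
      ∑ u ∈ Finset.univ.erase v, (1 : ℝ) / (G.dist u v) := by
  obtain ⟨m, rfl⟩ : ∃ m, n = m + 3 := ⟨n - 3, by have := h.1; omega⟩
  have hinv : AntitoneOn (fun k : ℕ => 1 / (k : ℝ)) (Set.Ici 1) := fun a ha b _ hab =>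
    one_div_le_one_div_of_le (Nat.cast_pos.2 ha) (by exact_mod_cast hab)
  have hcycle (w : Fin (m + 3)) :
      ∑ u ∈ univ.erase w, (1 : ℝ) / ((cycleGraph (m + 3)).dist u w)
        ≤ ∑ u ∈ univ.erase v, (1 : ℝ) / (G.dist u v) :=
    sum_le_sum_of_card_filter_le hinv (fun k _ => by positivity)
      (fun u hu => cycleGraph_connected.pos_dist_of_ne (ne_of_mem_erase hu))
      (fun u hu => h.2.1.pos_dist_of_ne (ne_of_mem_erase hu))
      (fun k => (cycleGraph_connected.card_filter_dist_le_le_min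
        (fun _ => cycleGraph_degree_three_le.le) w k).trans
          (by simpa using h.min_le_card_filter_dist_le v k))
  rw [div_mul_eq_mul_div, div_le_iff₀ (by positivity), two_mul_hararyIndex]
  calc _ ≤ ∑ _w : Fin (m + 3), ∑ u ∈ univ.erase v, (1 : ℝ) / (G.dist u v) :=
        sum_le_sum fun w _ => hcycle w
    _ = _ := by simp [mul_comm]
end
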